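/- Suppose p = (α₁₂,α₂₃,α₃₁,γ₁,γ₂,γ₃) ∈ Δ̄∖Δ is badly degenerate (at least one of its five associated triples is a permutation of (0,0,π), and none of its five triples is a permutation of (0,β,π−β) with 0 < β < π). Then there is a permutation (i,j,k) of (1,2,3) such that γᵢ = α_{jk} = π and γⱼ = γₖ = α_{ij} = α_{ki} = 0. -/

import Mathlib

/-!
All five associated triples sum to `π`, so a badly degenerate triple has an entry equal to `π`.
In `Δ̄` such an entry forces equality in the defining inequalities and pins the point down up to
one parameter `β`. If the bad triple is `(γ′)` or `(γ″)` there is no parameter left. If it is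
`(γᵢ, μᵢ, νᵢ)`, the parameter reappears in another triple, `(γⱼ, μⱼ, νⱼ)` or `(γ′)`, as a
permutation of `(0, β, π - β)`; excluding mildly degenerate triples forces `β ∈ {0, π}`.
The data are invariant under the cyclic relabelling `1 → 2 → 3 → 1`, so only `i = 1` needs work.
-/

open Real

/-- Membership of `(α₁₂,α₂₃,α₃₁,γ₁,γ₂,γ₃)` in Δ. -/
def InD (a12 a23 a31 g1 g2 g3 : ℝ) : Prop :=
  0 < a12 ∧ 0 < a23 ∧ 0 < a31 ∧ 0 < g1 ∧ 0 < g2 ∧ 0 < g3 ∧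
  g1 + g2 + g3 = π ∧
  g1 + a12 + a31 < π ∧ g2 + a23 + a12 < π ∧ g3 + a31 + a23 < π

/-- Membership of `(α₁₂,α₂₃,α₃₁,γ₁,γ₂,γ₃)` in the closure Δ̄. -/
def InDbar (a12 a23 a31 g1 g2 g3 : ℝ) : Prop :=
  0 ≤ a12 ∧ 0 ≤ a23 ∧ 0 ≤ a31 ∧ 0 ≤ g1 ∧ 0 ≤ g2 ∧ 0 ≤ g3 ∧
  g1 + g2 + g3 = π ∧
  g1 + a12 + a31 ≤ π ∧ g2 + a23 + a12 ≤ π ∧ g3 + a31 + a23 ≤ π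

/-- The five associated ideal-tetrahedron angle triples of a point of ℝ⁶. -/
noncomputable def fiveTriples (a12 a23 a31 g1 g2 g3 : ℝ) : List (List ℝ) :=
  [ [(π + a31 - a12 - g1) / 2, (π + a12 - a23 - g2) / 2, (π + a23 - a31 - g3) / 2],
    [(π - a31 + a12 - g1) / 2, (π - a12 + a23 - g2) / 2, (π - a23 + a31 - g3) / 2],
    [g1, (π + a31 + a12 - g1) / 2, (π - a31 - a12 - g1) / 2],
    [g2, (π + a12 + a23 - g2) / 2, (π - a12 - a23 - g2) / 2],
    [g3, (π + a23 + a31 - g3) / 2, (π - a23 - a31 - g3) / 2] ]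

/-- A triple is badly degenerate: it is a permutation of `(0,0,π)`. -/
def IsBadTriple (l : List ℝ) : Prop := l.Perm [0, 0, π]

/-- A triple is mildly degenerate: a permutation of `(0,β,π−β)` with `0 < β < π`. -/
def IsMildTriple (l : List ℝ) : Prop :=
  ∃ β : ℝ, 0 < β ∧ β < π ∧ l.Perm [0, β, π - β]

theorem IsBadTriple.eq_pi_or_eq_pi_or_eq_pi {x y z : ℝ} (h : IsBadTriple [x, y, z]) :
    x = π ∨ y = π ∨ z = π := by
  simpa [eq_comm] using h.mem_iff.mpr (by simp : π ∈ [0, 0, π])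

theorem IsMildTriple.of_perm {l l' : List ℝ} (hm : IsMildTriple l') (h : l.Perm l') :
    IsMildTriple l :=
  let ⟨β, hβ₀, hβπ, hp⟩ := hm
  ⟨β, hβ₀, hβπ, h.trans hp⟩

theorem not_isMildTriple_rotate {x y z : ℝ} (h : ¬ IsMildTriple [x, y, z]) :
    ¬ IsMildTriple [y, z, x] :=
  fun hm => h (hm.of_perm (List.rotate_perm [x, y, z] 1).symm)

theorem isMildTriple_of_pos {l : List ℝ} {x y : ℝ} (hl : l.Perm [0, x, y]) (hx : 0 < x)
    (hy : 0 < y) (hxy : x + y = π) : IsMildTriple l :=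
  ⟨x, hx, by linarith, by rwa [← eq_sub_of_add_eq' hxy]⟩

theorem eq_zero_or_eq_zero_of_not_isMildTriple {l : List ℝ} {x y : ℝ} (h : ¬ IsMildTriple l)
    (hl : l.Perm [0, x, y]) (hx : 0 ≤ x) (hy : 0 ≤ y) (hxy : x + y = π) : x = 0 ∨ y = 0 := by
  by_contra! hne
  exact h (isMildTriple_of_pos hl (hx.lt_of_ne' hne.1) (hy.lt_of_ne' hne.2) hxy)

theorem InDbar.rotate {a12 a23 a31 g1 g2 g3 : ℝ} (h : InDbar a12 a23 a31 g1 g2 g3) :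
    InDbar a23 a31 a12 g2 g3 g1 := by
  obtain ⟨h12, h23, h31, hg1, hg2, hg3, hsum, hc1, hc2, hc3⟩ := h
  exact ⟨h23, h31, h12, hg2, hg3, hg1, by linarith, hc2, hc3, hc1⟩

def IsPiAtOne (a12 a23 a31 g1 g2 g3 : ℝ) : Prop :=
  g1 = π ∧ a23 = π ∧ g2 = 0 ∧ g3 = 0 ∧ a12 = 0 ∧ a31 = 0

def IsPiAtSomeVertex (a12 a23 a31 g1 g2 g3 : ℝ) : Prop :=
  IsPiAtOne a12 a23 a31 g1 g2 g3 ∨ IsPiAtOne a23 a31 a12 g2 g3 g1 ∨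
    IsPiAtOne a31 a12 a23 g3 g1 g2

theorem IsPiAtSomeVertex.of_rotate {a12 a23 a31 g1 g2 g3 : ℝ}
    (h : IsPiAtSomeVertex a23 a31 a12 g2 g3 g1) : IsPiAtSomeVertex a12 a23 a31 g1 g2 g3 := by
  rcases h with h | h | h
  exacts [Or.inr (Or.inl h), Or.inr (Or.inr h), Or.inl h]

section

variable {a12 a23 a31 g1 g2 g3 : ℝ}

theorem isPiAtSomeVertex_of_isBadTriple_first (hbar : InDbar a12 a23 a31 g1 g2 g3)
    (hbad : IsBadTriple
      [(π + a31 - a12 - g1) / 2, (π + a12 - a23 - g2) / 2, (π + a23 - a31 - g3) / 2]) :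
    IsPiAtSomeVertex a12 a23 a31 g1 g2 g3 := by
  obtain ⟨h12, h23, h31, hg1, hg2, hg3, hsum, hc1, hc2, hc3⟩ := hbar
  rcases hbad.eq_pi_or_eq_pi_or_eq_pi with h | h | h
  · refine Or.inr (Or.inl ⟨?_, ?_, ?_, ?_, ?_, ?_⟩) <;> linarith
  · refine Or.inr (Or.inr ⟨?_, ?_, ?_, ?_, ?_, ?_⟩) <;> linarith
  · refine Or.inl ⟨?_, ?_, ?_, ?_, ?_, ?_⟩ <;> linarith

theorem isPiAtSomeVertex_of_isBadTriple_second (hbar : InDbar a12 a23 a31 g1 g2 g3)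
    (hbad : IsBadTriple
      [(π - a31 + a12 - g1) / 2, (π - a12 + a23 - g2) / 2, (π - a23 + a31 - g3) / 2]) :
    IsPiAtSomeVertex a12 a23 a31 g1 g2 g3 := by
  obtain ⟨h12, h23, h31, hg1, hg2, hg3, hsum, hc1, hc2, hc3⟩ := hbar
  rcases hbad.eq_pi_or_eq_pi_or_eq_pi with h | h | h
  · refine Or.inr (Or.inr ⟨?_, ?_, ?_, ?_, ?_, ?_⟩) <;> linarith
  · refine Or.inl ⟨?_, ?_, ?_, ?_, ?_, ?_⟩ <;> linarith
  · refine Or.inr (Or.inl ⟨?_, ?_, ?_, ?_, ?_, ?_⟩) <;> linarith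

theorem isPiAtSomeVertex_of_isBadTriple_vertex (hbar : InDbar a12 a23 a31 g1 g2 g3)
    (hmild₁ : ¬ IsMildTriple
      [(π + a31 - a12 - g1) / 2, (π + a12 - a23 - g2) / 2, (π + a23 - a31 - g3) / 2])
    (hmild₂ : ¬ IsMildTriple [g2, (π + a12 + a23 - g2) / 2, (π - a12 - a23 - g2) / 2])
    (hbad : IsBadTriple [g1, (π + a31 + a12 - g1) / 2, (π - a31 - a12 - g1) / 2]) :
    IsPiAtSomeVertex a12 a23 a31 g1 g2 g3 := by
  obtain ⟨h12, h23, h31, hg1, hg2, hg3, hsum, hc1, hc2, hc3⟩ := hbar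
  rcases hbad.eq_pi_or_eq_pi_or_eq_pi with h | h | h
  · -- `γ₁ = π`: then `(γ₂, μ₂, ν₂) = (0, (π + α₂₃)/2, (π - α₂₃)/2)`
    obtain rfl : g2 = 0 := by linarith
    obtain rfl : a12 = 0 := by linarith
    have ha23 := eq_zero_or_eq_zero_of_not_isMildTriple hmild₂ (List.Perm.refl _)
      (by linarith) (by linarith) (by ring)
    refine Or.inl ⟨h, ?_, rfl, ?_, rfl, ?_⟩ <;> rcases ha23 with h' | h' <;> linarith
  · -- `μ₁ = π`: then `γ′ = (α₃₁, α₁₂, 0)` with `α₃₁ + α₁₂ = π`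
    have hν : (π + a23 - a31 - g3) / 2 = 0 := by linarith
    rw [hν] at hmild₁
    have ha := eq_zero_or_eq_zero_of_not_isMildTriple hmild₁ (List.rotate_perm [0, _, _] 1)
      (by linarith) (by linarith) (by linarith)
    rcases ha with h' | h'
    · refine Or.inr (Or.inr ⟨?_, ?_, ?_, ?_, ?_, ?_⟩) <;> linarith
    · refine Or.inr (Or.inl ⟨?_, ?_, ?_, ?_, ?_, ?_⟩) <;> linarith
  · linarith [pi_pos]

end

theorem badly_degenerate_structure_general (a12 a23 a31 g1 g2 g3 : ℝ)
    (hbar : InDbar a12 a23 a31 g1 g2 g3)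
    (hbad : ∃ l ∈ fiveTriples a12 a23 a31 g1 g2 g3, IsBadTriple l)
    (hnomild : ∀ l ∈ fiveTriples a12 a23 a31 g1 g2 g3, ¬ IsMildTriple l) :
    (g1 = π ∧ a23 = π ∧ g2 = 0 ∧ g3 = 0 ∧ a12 = 0 ∧ a31 = 0) ∨
    (g2 = π ∧ a31 = π ∧ g3 = 0 ∧ g1 = 0 ∧ a23 = 0 ∧ a12 = 0) ∨
    (g3 = π ∧ a12 = π ∧ g1 = 0 ∧ g2 = 0 ∧ a31 = 0 ∧ a23 = 0) := by
  have hmild₁ := hnomild _ (List.mem_cons_self ..)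
  obtain ⟨l, hl, hl_bad⟩ := hbad
  simp only [fiveTriples, List.mem_cons, List.not_mem_nil, or_false] at hl
  rcases hl with rfl | rfl | rfl | rfl | rfl
  · exact isPiAtSomeVertex_of_isBadTriple_first hbar hl_bad
  · exact isPiAtSomeVertex_of_isBadTriple_second hbar hl_bad
  · exact isPiAtSomeVertex_of_isBadTriple_vertex hbar hmild₁
      (hnomild _ (by simp [fiveTriples])) hl_bad
  · refine IsPiAtSomeVertex.of_rotate <| isPiAtSomeVertex_of_isBadTriple_vertex hbar.rotate
      (not_isMildTriple_rotate hmild₁) (hnomild _ (by simp [fiveTriples])) hl_bad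
  · refine IsPiAtSomeVertex.of_rotate <| IsPiAtSomeVertex.of_rotate <|
      isPiAtSomeVertex_of_isBadTriple_vertex hbar.rotate.rotate
        (not_isMildTriple_rotate (not_isMildTriple_rotate hmild₁))
        (hnomild _ (by simp [fiveTriples])) hl_bad

theorem badly_degenerate_structure (a12 a23 a31 g1 g2 g3 : ℝ)
    (hbar : InDbar a12 a23 a31 g1 g2 g3) (hni : ¬ InD a12 a23 a31 g1 g2 g3)
    (hbad : ∃ l ∈ fiveTriples a12 a23 a31 g1 g2 g3, IsBadTriple l)
    (hnomild : ∀ l ∈ fiveTriples a12 a23 a31 g1 g2 g3, ¬ IsMildTriple l) :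
    (g1 = π ∧ a23 = π ∧ g2 = 0 ∧ g3 = 0 ∧ a12 = 0 ∧ a31 = 0) ∨
    (g2 = π ∧ a31 = π ∧ g3 = 0 ∧ g1 = 0 ∧ a23 = 0 ∧ a12 = 0) ∨
    (g3 = π ∧ a12 = π ∧ g1 = 0 ∧ g2 = 0 ∧ a31 = 0 ∧ a23 = 0) :=
  badly_degenerate_structure_general a12 a23 a31 g1 g2 g3 hbar hbad hnomild
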